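/- arXiv:2403.07640 — 8 statements merged into one kernel-verified Lean document; each statement's English description precedes it below -/
import Mathlib

section
/- If a finite directed graph G = (V,E) is undirected (i.e., its edge relation is symmetric) and is (r,s)-robust with l hops with respect to a set F ⊆ V, where r ≥ 1 and s ≥ 1, then G is r-connected: for every set S ⊆ V with |S| < r and S ≠ V, the subgraph of G induced by V∖S is connected. -/
/-!  Common definitions: multi-hop robustness notions for finite directed graphs,
following Yuan & Ishii, "Asynchronous Approximate Byzantine Consensus".

A directed graph on vertex type `V` is given by its edge relation `E : V → V → Prop`,
where `E j i` means `(j,i)` is an edge (node `i` can receive information from `j`). -/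

/-- `p` is an at-most-`l`-hop path from `j` to `i`: a list of distinct vertices,
consecutive ones joined by edges, starting at `j`, ending at `i`, with at least one
edge (length ≥ 2 as a vertex list) and at most `l` edges (length ≤ l+1). -/
def IsHopPath {V : Type*} (E : V → V → Prop) (l : ℕ) (j i : V) (p : List V) : Prop :=
  p.Nodup ∧ p.Chain' E ∧ p.head? = some j ∧ p.getLast? = some i ∧
    2 ≤ p.length ∧ p.length ≤ l + 1

/-- The intermediate nodes of a path: all vertices except the first and the last. -/
def interm {V : Type*} (p : List V) : List V := p.tail.dropLast

/-- Node `i` is in `Z^r_S` with respect to `F`: `i ∈ S` and there are `r` pairwise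
independent paths of at most `l` hops, each starting outside `S` and ending at `i`,
none of which has an intermediate node in `F`.  Independence means that two distinct
paths share no vertex other than `i`. -/
def MemZ {V : Type*} (E : V → V → Prop) (l : ℕ) (F S : Set V) (r : ℕ) (i : V) : Prop :=
  i ∈ S ∧ ∃ P : Fin r → List V,
    (∀ a, ∃ j, j ∉ S ∧ IsHopPath E l j i (P a)) ∧
    (∀ a, ∀ v ∈ interm (P a), v ∉ F) ∧
    (∀ a b, a ≠ b → ∀ v, v ∈ P a → v ∈ P b → v = i)

/-- The set `Z^r_S` with respect to `F`. -/
def ZSet {V : Type*} (E : V → V → Prop) (l : ℕ) (F S : Set V) (r : ℕ) : Set V :=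
  {i | MemZ E l F S r i}

/-- `(r,s)`-robustness with `l` hops with respect to `F`, where the nonempty disjoint
subsets range over subsets of a ground vertex set `W` (used for induced subgraphs). -/
def RSRobustOn {V : Type*} (E : V → V → Prop) (W : Set V) (l r s : ℕ) (F : Set V) : Prop :=
  ∀ V1 V2 : Set V, V1 ⊆ W → V2 ⊆ W → V1.Nonempty → V2.Nonempty → Disjoint V1 V2 →
    ZSet E l F V1 r = V1 ∨ ZSet E l F V2 r = V2 ∨
      s ≤ (ZSet E l F V1 r).ncard + (ZSet E l F V2 r).ncard

/-- `G = (V,E)` is `(r,s)`-robust with `l` hops with respect to `F`. -/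
def RSRobust {V : Type*} (E : V → V → Prop) (l r s : ℕ) (F : Set V) : Prop :=
  RSRobustOn E Set.univ l r s F

/-- The edge relation of the subgraph of `E` induced by the vertex set `W`. -/
def induced {V : Type*} (E : V → V → Prop) (W : Set V) : V → V → Prop :=
  fun j i => E j i ∧ j ∈ W ∧ i ∈ W

/-- `G` is `r`-strictly robust with `l` hops with respect to `F`: the subgraph of `G`
induced by `V ∖ F` is `r`-robust (i.e. `(r,1)`-robust) with `l` hops with respect to `F`. -/
def StrictRobust {V : Type*} (E : V → V → Prop) (l r : ℕ) (F : Set V) : Prop :=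
  RSRobustOn (induced E Fᶜ) Fᶜ l r 1 F

/-- `F` is an `f`-total set: it contains at most `f` nodes. -/
def FTotal {V : Type*} (f : ℕ) (F : Set V) : Prop := F.ncard ≤ f

/-- `F` is `f`-local (in `l`-hop neighbors): every node outside `F` has at most `f`
nodes of `F` among the nodes from which it is reachable by a path of at most `l` hops. -/
def FLocal {V : Type*} (E : V → V → Prop) (l f : ℕ) (F : Set V) : Prop :=
  ∀ i, i ∉ F → {j ∈ F | ∃ p, IsHopPath E l j i p}.ncard ≤ f

/-!
If removing a set `S` with `|S| < r` disconnects `G`, split `V ∖ S` into the component `V₁` of a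
vertex and the rest `V₂`. Every edge from a vertex outside `S` into `V₁` (by symmetry of the
edges) or into `V₂` starts inside that same set. So each of `r` independent paths that start outside `V₁` and end at a
node `i ∈ V₁` has to pass through `S`; the paths share only `i ∉ S`, hence they meet `S` in `r`
distinct vertices, which is impossible. Thus `Z^r_{V₁} = Z^r_{V₂} = ∅`, against robustness.
-/

open Relation

section

variable {V : Type*}

theorem IsHopPath.reflTransGen_induced {E : V → V → Prop} {l : ℕ} {j i : V} {p : List V}
    {W : Set V} (hp : IsHopPath E l j i p) (hW : ∀ w ∈ p, w ∈ W) :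
    ReflTransGen (induced E W) j i := by
  obtain ⟨-, hchain, hhead, hlast, -⟩ := hp
  obtain ⟨t, rfl⟩ := List.head?_eq_some_iff.mp hhead
  refine List.relationReflTransGen_of_exists_isChain_cons t
    (hchain.imp_of_mem_imp fun a b ha hb hab => ⟨hab, hW a ha, hW b hb⟩) ?_
  exact Option.some.inj ((List.getLast?_eq_some_getLast _).symm.trans hlast)

theorem mem_of_reflTransGen_induced_compl {E : V → V → Prop} {S T : Set V} {j i : V}
    (hT : ∀ a b, E a b → a ∉ S → b ∈ T → a ∈ T) (h : ReflTransGen (induced E Sᶜ) j i)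
    (hi : i ∈ T) : j ∈ T := by
  induction h using ReflTransGen.head_induction_on with
  | refl => exact hi
  | head hab _ hb => exact hT _ _ hab.1 hab.2.1 hb

theorem le_ncard_of_independent_paths_meet {r : ℕ} {S : Set V} (hS : S.Finite) {i : V}
    (hi : i ∉ S) (P : Fin r → List V) (hind : ∀ a b, a ≠ b → ∀ v, v ∈ P a → v ∈ P b → v = i)
    (hmeet : ∀ a, ∃ w ∈ P a, w ∈ S) : r ≤ S.ncard := by
  have := hS.to_subtype
  choose f hfP hfS using hmeet
  have hinj : Function.Injective fun a => (⟨f a, hfS a⟩ : S) := by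
    intro a b hab
    by_contra hne
    have hfab : f a = f b := congrArg Subtype.val hab
    exact hi (hind a b hne (f a) (hfP a) (hfab ▸ hfP b) ▸ hfS a)
  simpa [Nat.card_coe_set_eq] using Nat.card_le_card_of_injective _ hinj

theorem ZSet_eq_empty_of_inEdges_mem {E : V → V → Prop} {l r : ℕ} {F S T : Set V}
    (hS : S.Finite) (hSr : S.ncard < r) (hTS : Disjoint T S)
    (hT : ∀ a b, E a b → a ∉ S → b ∈ T → a ∈ T) : ZSet E l F T r = ∅ := by
  refine Set.eq_empty_of_forall_notMem fun i ⟨hiT, P, hP, _, hind⟩ => hSr.not_ge ?_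
  refine le_ncard_of_independent_paths_meet hS (Set.disjoint_left.mp hTS hiT) P hind fun a => ?_
  by_contra! hP_avoids
  obtain ⟨j, hjT, hp⟩ := hP a
  exact hjT (mem_of_reflTransGen_induced_compl hT (hp.reflTransGen_induced hP_avoids) hiT)

theorem RSRobustOn.ZSet_nonempty {E : V → V → Prop} {W : Set V} {l r s : ℕ} {F : Set V}
    (h : RSRobustOn E W l r s F) (hs : 1 ≤ s) {V1 V2 : Set V} (h1W : V1 ⊆ W) (h2W : V2 ⊆ W)
    (h1 : V1.Nonempty) (h2 : V2.Nonempty) (hdisj : Disjoint V1 V2) :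
    (ZSet E l F V1 r).Nonempty ∨ (ZSet E l F V2 r).Nonempty := by
  rcases h V1 V2 h1W h2W h1 h2 hdisj with hZ1 | hZ2 | hcard
  · exact .inl (by rwa [hZ1])
  · exact .inr (by rwa [hZ2])
  · by_contra! hempty
    simp only [hempty.1, hempty.2, Set.ncard_empty] at hcard
    omega

end

theorem robust_connectivity_general {V : Type*} [Fintype V] (E : V → V → Prop)
    (hsym : Symmetric E) (l r s : ℕ) (hs : 1 ≤ s)
    (F : Set V) (h : RSRobust E l r s F) :
    ∀ S : Set V, S.ncard < r → S ≠ Set.univ →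
      ∀ u v : V, u ∉ S → v ∉ S → Relation.ReflTransGen (induced E Sᶜ) u v := by
  intro S hSr _ u v hu hv
  by_contra huv
  set V1 : Set V := {w | w ∉ S ∧ ReflTransGen (induced E Sᶜ) u w}
  set V2 : Set V := {w | w ∉ S ∧ ¬ ReflTransGen (induced E Sᶜ) u w}
  have hZ1 : ZSet E l F V1 r = ∅ :=
    ZSet_eq_empty_of_inEdges_mem S.toFinite hSr (Set.disjoint_left.mpr fun _ hw => hw.1)
      fun a b hab ha ⟨hb, hub⟩ => ⟨ha, hub.tail ⟨hsym hab, hb, ha⟩⟩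
  have hZ2 : ZSet E l F V2 r = ∅ :=
    ZSet_eq_empty_of_inEdges_mem S.toFinite hSr (Set.disjoint_left.mpr fun _ hw => hw.1)
      fun a b hab ha ⟨hb, hub⟩ => ⟨ha, fun hua => hub (hua.tail ⟨hab, ha, hb⟩)⟩
  have hdisj : Disjoint V1 V2 := Set.disjoint_left.mpr fun _ hw hw' => hw'.2 hw.2
  have hu1 : u ∈ V1 := ⟨hu, .refl⟩
  have hv2 : v ∈ V2 := ⟨hv, huv⟩
  rcases h.ZSet_nonempty hs (Set.subset_univ _) (Set.subset_univ _) ⟨u, hu1⟩ ⟨v, hv2⟩ hdisj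
    with hne | hne
  · exact hne.ne_empty hZ1
  · exact hne.ne_empty hZ2

/-- an undirected `(r,s)`-robust graph (with `r,s ≥ 1`) is `r`-connected:
removing fewer than `r` vertices leaves the induced subgraph connected. -/
theorem robust_connectivity {V : Type*} [Fintype V] (E : V → V → Prop)
    (hsym : Symmetric E) (l r s : ℕ) (hl : 1 ≤ l) (hr : 1 ≤ r) (hs : 1 ≤ s)
    (F : Set V) (h : RSRobust E l r s F) :
    ∀ S : Set V, S.ncard < r → S ≠ Set.univ →
      ∀ u v : V, u ∉ S → v ∉ S → Relation.ReflTransGen (induced E Sᶜ) u v :=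
  robust_connectivity_general E hsym l r s hs F h
end

section
/- If a finite directed graph G = (V,E) with |V| = n ≥ 2 is (r,s)-robust with l hops with respect to a set F ⊆ V, where s ≥ 1, then r ≤ ⌈n/2⌉. -/
/- The `r` independent paths witnessing `i ∈ Z^r_S` start at `r` distinct nodes
outside `S`, so `r ≤ |V ∖ S|`. Split `V` into `S` with `⌊n/2⌋` nodes and its complement with
`⌈n/2⌉` nodes; since `s ≥ 1`, robustness puts some node into `Z^r_S` or `Z^r_{V ∖ S}`, and
either way `r ≤ ⌈n/2⌉`. -/

section

variable {V : Type*} {E : V → V → Prop} {l r s : ℕ} {F S : Set V}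

lemma IsHopPath.head_mem {j i : V} {p : List V} (hp : IsHopPath E l j i p) : j ∈ p :=
  List.mem_of_mem_head? hp.2.2.1

lemma MemZ.le_ncard_compl [Finite V] {i : V} (hi : MemZ E l F S r i) : r ≤ Sᶜ.ncard := by
  obtain ⟨hiS, P, hP, -, hindep⟩ := hi
  choose j hjS hjP using hP
  have hinj : Function.Injective fun a => (⟨j a, hjS a⟩ : ↥Sᶜ) := by
    intro a b hab
    by_contra hne
    have hja : j a = j b := congrArg Subtype.val hab
    have hji : j a = i := hindep a b hne (j a) (hjP a).head_mem (hja ▸ (hjP b).head_mem)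
    exact hjS a (hji ▸ hiS)
  calc r = Nat.card (Fin r) := (Nat.card_fin r).symm
    _ ≤ Nat.card ↥Sᶜ := Nat.card_le_card_of_injective _ hinj
    _ = Sᶜ.ncard := Nat.card_coe_set_eq _

lemma RSRobustOn.zSet_nonempty_or {W V₁ V₂ : Set V} (h : RSRobustOn E W l r s F) (hs : 1 ≤ s)
    (h₁ : V₁ ⊆ W) (h₂ : V₂ ⊆ W) (hne₁ : V₁.Nonempty) (hne₂ : V₂.Nonempty)
    (hdisj : Disjoint V₁ V₂) :
    (ZSet E l F V₁ r).Nonempty ∨ (ZSet E l F V₂ r).Nonempty := by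
  rcases h V₁ V₂ h₁ h₂ hne₁ hne₂ hdisj with hZ | hZ | hcard
  · exact .inl (by rwa [hZ])
  · exact .inr (by rwa [hZ])
  · by_cases hZ : (ZSet E l F V₁ r).ncard = 0
    · exact .inr (Set.nonempty_of_ncard_ne_zero (by omega))
    · exact .inl (Set.nonempty_of_ncard_ne_zero hZ)

lemma RSRobustOn.le_ncard_compl_or [Finite V] {W V₁ V₂ : Set V} (h : RSRobustOn E W l r s F)
    (hs : 1 ≤ s) (h₁ : V₁ ⊆ W) (h₂ : V₂ ⊆ W) (hne₁ : V₁.Nonempty) (hne₂ : V₂.Nonempty)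
    (hdisj : Disjoint V₁ V₂) : r ≤ V₁ᶜ.ncard ∨ r ≤ V₂ᶜ.ncard := by
  rcases h.zSet_nonempty_or hs h₁ h₂ hne₁ hne₂ hdisj with ⟨i, hi⟩ | ⟨i, hi⟩
  · exact .inl hi.le_ncard_compl
  · exact .inr hi.le_ncard_compl

end

theorem robust_upper_bound_general {V : Type*} [Fintype V] (E : V → V → Prop) (l r s : ℕ)
    (hs : 1 ≤ s) (hn : 2 ≤ Fintype.card V) (F : Set V)
    (h : RSRobust E l r s F) :
    r ≤ (Fintype.card V + 1) / 2 := by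
  obtain ⟨T, -, hT⟩ := (Finset.univ : Finset V).exists_subset_card_eq
    (n := Fintype.card V / 2) (by rw [Finset.card_univ]; omega)
  set S : Set V := ↑T
  have hS : S.ncard = Fintype.card V / 2 := by rw [Set.ncard_coe_finset, hT]
  have hSc : Sᶜ.ncard = Fintype.card V - Fintype.card V / 2 := by
    rw [Set.ncard_compl, hS, Nat.card_eq_fintype_card (α := V)]
  have hne : S.Nonempty := Set.nonempty_of_ncard_ne_zero (by omega)
  have hcne : Sᶜ.Nonempty := Set.nonempty_of_ncard_ne_zero (by omega)
  rcases h.le_ncard_compl_or hs (Set.subset_univ _) (Set.subset_univ _) hne hcne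
    disjoint_compl_right with hr | hr
  · omega
  · rw [compl_compl] at hr
    omega

/-- if `G` with `n ≥ 2` vertices is `(r,s)`-robust with `l` hops
w.r.t. `F` (with `s ≥ 1`), then `r ≤ ⌈n/2⌉`. -/
theorem robust_upper_bound {V : Type*} [Fintype V] (E : V → V → Prop) (l r s : ℕ)
    (hl : 1 ≤ l) (hs : 1 ≤ s) (hn : 2 ≤ Fintype.card V) (F : Set V)
    (h : RSRobust E l r s F) :
    r ≤ (Fintype.card V + 1) / 2 :=
  robust_upper_bound_general E l r s hs hn F h
end

section
/- Let G = (V,E) be a finite directed graph, let f ≥ 0 and l ≥ 1 be integers. If G is (2f+1)-robust with l hops under the f-local model, then G is (f+1)-strictly robust with l hops under the f-local model. -/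
/-! A node `i ∉ F` of `Z^{2f+1}_S` has `2f+1` independent paths into it; their sources are
distinct `l`-hop in-neighbours of `i`, so by `f`-locality at most `f` of them lie in `F`. The
remaining `f+1` paths avoid `F` entirely, hence live in the subgraph induced by `V ∖ F`. So for
`S ⊆ V ∖ F` the set `Z^{2f+1}_S` of `G` is contained in the set `Z^{f+1}_S` of the induced
subgraph, and one nonempty `Z^{2f+1}` set, which robustness of `G` provides, already gives
`(f+1, 1)`-robustness of the subgraph. -/

namespace IsHopPath

variable {V : Type*} {E : V → V → Prop} {l : ℕ} {j i : V} {p : List V}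

lemma eq_cons_interm_append (h : IsHopPath E l j i p) : p = j :: (interm p ++ [i]) := by
  obtain ⟨-, -, hhead, hlast, hlen, -⟩ := h
  match p, hlen with
  | a :: b :: q, _ =>
    obtain rfl : j = a := by simpa using hhead.symm
    have hne : b :: q ≠ [] := List.cons_ne_nil _ _
    rw [List.getLast?_eq_some_getLast (List.cons_ne_nil _ _), List.getLast_cons hne,
      Option.some_inj] at hlast
    change j :: b :: q = j :: ((b :: q).dropLast ++ [i])
    rw [← hlast, List.dropLast_append_getLast hne]

lemma mem_cases (h : IsHopPath E l j i p) {v : V} (hv : v ∈ p) :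
    v = j ∨ v ∈ interm p ∨ v = i := by
  rw [h.eq_cons_interm_append] at hv
  simpa [or_assoc] using hv

lemma src_mem (h : IsHopPath E l j i p) : j ∈ p := by
  rw [h.eq_cons_interm_append]
  exact List.mem_cons_self

lemma src_ne_dst (h : IsHopPath E l j i p) : j ≠ i := by
  have hnodup := h.1
  rw [h.eq_cons_interm_append, List.nodup_cons] at hnodup
  exact fun hji => hnodup.1 (by simp [hji])

lemma induced {W : Set V} (h : IsHopPath E l j i p) (hW : ∀ v ∈ p, v ∈ W) :
    IsHopPath (induced E W) l j i p := by
  obtain ⟨hnodup, hchain, hhead, hlast, hlen, hlen'⟩ := h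
  refine ⟨hnodup, ?_, hhead, hlast, hlen, hlen'⟩
  rw [List.Chain', List.isChain_iff_getElem] at hchain ⊢
  exact fun k hk => ⟨hchain k hk, hW _ (List.getElem_mem _), hW _ (List.getElem_mem _)⟩

end IsHopPath

lemma FLocal.ncard_setOf_mem_le {V ι : Type*} [Finite V] {E : V → V → Prop} {l f : ℕ}
    {F : Set V} (hF : FLocal E l f F) {i : V} (hi : i ∉ F) {j : ι → V}
    (hj : Function.Injective j) (hpath : ∀ a, ∃ p, IsHopPath E l (j a) i p) :
    {a | j a ∈ F}.ncard ≤ f :=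
  calc {a | j a ∈ F}.ncard ≤ {x ∈ F | ∃ p, IsHopPath E l x i p}.ncard :=
        Set.ncard_le_ncard_of_injOn j (fun a ha => ⟨ha, hpath a⟩) hj.injOn
    _ ≤ f := hF i hi

lemma exists_embedding_fin_forall_not {ι : Type*} [Fintype ι] {q : ι → Prop} {m k : ℕ}
    (hq : {a | q a}.ncard ≤ m) (hcard : m + k ≤ Fintype.card ι) :
    ∃ e : Fin k ↪ ι, ∀ a, ¬ q (e a) := by
  classical
  have hk : Fintype.card (Fin k) ≤ Fintype.card {a | ¬ q a} := by
    have hsplit : {a | q a}.ncard + {a | ¬ q a}.ncard = Nat.card ι :=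
      Set.ncard_add_ncard_compl {a | q a}
    rw [Nat.card_eq_fintype_card] at hsplit
    rw [Fintype.card_fin, ← Nat.card_eq_fintype_card, Nat.card_coe_set_eq]
    omega
  obtain ⟨e⟩ := Function.Embedding.nonempty_of_card_le hk
  exact ⟨e.trans (Function.Embedding.subtype _), fun a => (e a).2⟩

lemma MemZ.induced_compl {V : Type*} [Finite V] {E : V → V → Prop} {l f : ℕ} {F S : Set V}
    {r : ℕ} {i : V} (hF : FLocal E l f F) (hS : S ⊆ Fᶜ) (hi : MemZ E l F S (f + r) i) :
    MemZ (induced E Fᶜ) l F S r i := by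
  obtain ⟨hiS, P, hsrc, hint, hind⟩ := hi
  choose j hjS hjP using hsrc
  have hj : Function.Injective j := fun a b hab => by_contra fun hne =>
    (hjP a).src_ne_dst (hind a b hne _ (hjP a).src_mem (hab ▸ (hjP b).src_mem))
  obtain ⟨e, he⟩ : ∃ e : Fin r ↪ Fin (f + r), ∀ a, j (e a) ∉ F :=
    exists_embedding_fin_forall_not (hF.ncard_setOf_mem_le (hS hiS) hj fun a => ⟨_, hjP a⟩)
      (Fintype.card_fin _).ge
  refine ⟨hiS, P ∘ e, fun a => ⟨j (e a), hjS _, (hjP _).induced fun v hv => ?_⟩,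
    fun a => hint _, fun a b hab => hind _ _ (e.injective.ne hab)⟩
  rcases (hjP _).mem_cases hv with rfl | hv | rfl
  exacts [he a, hint _ v hv, hS hiS]

lemma one_le_ncard_zSet_induced_compl {V : Type*} [Finite V] {E : V → V → Prop} {l f : ℕ}
    {F S : Set V} (hF : FLocal E l f F) (hS : S ⊆ Fᶜ) (hZ : (ZSet E l F S (2 * f + 1)).Nonempty) :
    1 ≤ (ZSet (induced E Fᶜ) l F S (f + 1)).ncard :=
  (Set.ncard_pos).2 <| hZ.mono fun _ hi =>
    MemZ.induced_compl hF hS (by rwa [show f + (f + 1) = 2 * f + 1 by omega])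

theorem strict_of_robust_general {V : Type*} [Fintype V] (E : V → V → Prop) (f l : ℕ)
    (h : ∀ F : Set V, FLocal E l f F → RSRobust E l (2 * f + 1) 1 F) :
    ∀ F : Set V, FLocal E l f F → StrictRobust E l (f + 1) F := by
  intro F hF V1 V2 h1 h2 hn1 hn2 hd
  obtain hZ | hZ :
      (ZSet E l F V1 (2 * f + 1)).Nonempty ∨ (ZSet E l F V2 (2 * f + 1)).Nonempty := by
    rcases h F hF V1 V2 (Set.subset_univ _) (Set.subset_univ _) hn1 hn2 hd with hZ | hZ | hZ
    · exact .inl (by rwa [hZ])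
    · exact .inr (by rwa [hZ])
    · by_contra! hempty
      simp [hempty.1, hempty.2] at hZ
  · exact .inr (.inr (le_add_right (one_le_ncard_zSet_induced_compl hF h1 hZ)))
  · exact .inr (.inr (le_add_left (one_le_ncard_zSet_induced_compl hF h2 hZ)))

/-- if `G` is `(2f+1)`-robust with `l` hops under the `f`-local model,
then `G` is `(f+1)`-strictly robust with `l` hops under the `f`-local model. -/
theorem strict_of_robust {V : Type*} [Fintype V] (E : V → V → Prop) (f l : ℕ)
    (hl : 1 ≤ l)
    (h : ∀ F : Set V, FLocal E l f F → RSRobust E l (2 * f + 1) 1 F) :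
    ∀ F : Set V, FLocal E l f F → StrictRobust E l (f + 1) F :=
  strict_of_robust_general E f l h
end

section
/- There exists a finite directed graph G = (V,E) that is (2,2)-robust with 1 hop under the 1-local model but is not 2-strictly robust with 1 hop under the 1-local model. (Hence condition (C) of Proposition 5 with f = 1, l = 1 does not imply condition (B).) -/
/-!
With one hop, `Z^2_S` consists of the nodes of `S` with two distinct in-neighbours outside `S`,
whatever `F` is, so `(2,2)`-robustness of a small graph is a finite check. The example is the
complete digraph on `{0,…,4}` without the edges from `{3,4}` to `{1,2}`. Deleting the
(trivially `1`-local) set `F = {0}` leaves `1` and `2` with a single in-neighbour each, so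
`Z^2_{1} = Z^2_{2} = ∅` in the induced subgraph and it is not `2`-robust.
-/

section OneHop

variable {V : Type*} {E : V → V → Prop}

theorem isHopPath_one_iff {j i : V} {p : List V} :
    IsHopPath E 1 j i p ↔ p = [j, i] ∧ j ≠ i ∧ E j i := by
  constructor
  · rintro ⟨hnd, hch, hhead, hlast, hlen₁, hlen₂⟩
    obtain ⟨x, y, rfl⟩ := List.length_eq_two.mp (le_antisymm hlen₂ hlen₁)
    obtain rfl : x = j := by simpa using hhead
    obtain rfl : y = i := by simpa using hlast
    exact ⟨rfl, by simpa using hnd, List.isChain_pair.mp hch⟩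
  · rintro ⟨rfl, hne, hE⟩
    exact ⟨by simpa using hne, List.isChain_pair.mpr hE, rfl, rfl, le_rfl, le_rfl⟩

theorem memZ_one_two_iff (F S : Set V) (i : V) :
    MemZ E 1 F S 2 i ↔ i ∈ S ∧ ∃ j₁ j₂, j₁ ≠ j₂ ∧ j₁ ∉ S ∧ j₂ ∉ S ∧
      j₁ ≠ i ∧ j₂ ≠ i ∧ E j₁ i ∧ E j₂ i := by
  simp only [MemZ, isHopPath_one_iff]
  constructor
  · rintro ⟨hi, P, hpath, -, hindep⟩
    obtain ⟨j₁, hj₁, hP₁, hne₁, hE₁⟩ := hpath 0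
    obtain ⟨j₂, hj₂, hP₂, hne₂, hE₂⟩ := hpath 1
    refine ⟨hi, j₁, j₂, fun h => hne₁ ?_, hj₁, hj₂, hne₁, hne₂, hE₁, hE₂⟩
    exact hindep 0 1 (by decide) j₁ (by simp [hP₁]) (by simp [hP₂, h])
  · rintro ⟨hi, j₁, j₂, hne, hj₁, hj₂, hne₁, hne₂, hE₁, hE₂⟩
    refine ⟨hi, ![[j₁, i], [j₂, i]], ?_, ?_, ?_⟩
    · intro a
      fin_cases a
      exacts [⟨j₁, hj₁, rfl, hne₁, hE₁⟩, ⟨j₂, hj₂, rfl, hne₂, hE₂⟩]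
    · intro a
      fin_cases a <;> simp [interm]
    · intro a b hab v
      fin_cases a <;> fin_cases b <;> simp at hab ⊢ <;> grind

/-- `Z^2_S` with one hop, as a finset (it is the same for every `F`). -/
def zFinset [Fintype V] [DecidableEq V] [DecidableRel E] (s : Finset V) : Finset V :=
  {i ∈ s | ∃ j₁ j₂, j₁ ≠ j₂ ∧ j₁ ∉ s ∧ j₂ ∉ s ∧ j₁ ≠ i ∧ j₂ ≠ i ∧ E j₁ i ∧ E j₂ i}

theorem coe_zFinset [Fintype V] [DecidableEq V] [DecidableRel E] (F : Set V) (s : Finset V) :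
    (zFinset (E := E) s : Set V) = ZSet E 1 F s 2 := by
  ext i
  simp [zFinset, ZSet, memZ_one_two_iff]

theorem rsRobust_one_two_of_zFinset [Fintype V] [DecidableEq V] [DecidableRel E] {s : ℕ}
    (h : ∀ s₁ s₂ : Finset V, s₁.Nonempty → s₂.Nonempty → Disjoint s₁ s₂ →
      zFinset (E := E) s₁ = s₁ ∨ zFinset (E := E) s₂ = s₂ ∨
        s ≤ (zFinset (E := E) s₁).card + (zFinset (E := E) s₂).card)
    (F : Set V) : RSRobust E 1 2 s F := by
  intro V₁ V₂ _ _ hV₁ hV₂ hdisj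
  lift V₁ to Finset V using V₁.toFinite
  lift V₂ to Finset V using V₂.toFinite
  simp only [← coe_zFinset F, Finset.coe_inj, Set.ncard_coe_finset]
  exact h V₁ V₂ (by simpa using hV₁) (by simpa using hV₂) (by simpa using hdisj)

theorem zSet_induced_singleton_eq_empty {F : Set V} {a : V}
    (ha : ({j | E j a} \ F).Subsingleton) (S : Set V) :
    ZSet (induced E Fᶜ) 1 S {a} 2 = ∅ := by
  refine Set.eq_empty_of_forall_notMem fun i hi => ?_
  obtain ⟨rfl, j₁, j₂, hne, -, -, -, -, ⟨hE₁, hj₁, -⟩, ⟨hE₂, hj₂, -⟩⟩ :=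
    (memZ_one_two_iff S {a} i).mp hi
  exact hne (ha ⟨hE₁, hj₁⟩ ⟨hE₂, hj₂⟩)

theorem not_strictRobust_one_two {F : Set V} {a b : V} (hab : a ≠ b) (haF : a ∉ F) (hbF : b ∉ F)
    (ha : ({j | E j a} \ F).Subsingleton) (hb : ({j | E j b} \ F).Subsingleton) :
    ¬ StrictRobust E 1 2 F := by
  intro h
  have hZa := zSet_induced_singleton_eq_empty ha F
  have hZb := zSet_induced_singleton_eq_empty hb F
  rcases h {a} {b} (by simpa using haF) (by simpa using hbF) (Set.singleton_nonempty a)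
      (Set.singleton_nonempty b) (Set.disjoint_singleton.mpr hab) with h | h | h
  · exact (Set.singleton_nonempty a).ne_empty (hZa ▸ h).symm
  · exact (Set.singleton_nonempty b).ne_empty (hZb ▸ h).symm
  · simp [hZa, hZb] at h

end OneHop

theorem FTotal.fLocal {V : Type*} [Finite V] {f : ℕ} {F : Set V} (hF : FTotal f F)
    (E : V → V → Prop) (l : ℕ) : FLocal E l f F :=
  fun _ _ => (Set.ncard_le_ncard (Set.sep_subset _ _)).trans hF

def exampleDigraph (j i : Fin 5) : Prop :=
  j ≠ i ∧ ¬ (3 ≤ j ∧ (i = 1 ∨ i = 2))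

instance : DecidableRel exampleDigraph := fun _ _ =>
  inferInstanceAs (Decidable (_ ∧ _))

theorem exampleDigraph_rsRobust (F : Set (Fin 5)) : RSRobust exampleDigraph 1 2 2 F :=
  rsRobust_one_two_of_zFinset (by decide) F

theorem exampleDigraph_inNbrs_sdiff_zero {i : Fin 5} (hi : i = 1 ∨ i = 2) :
    ({j | exampleDigraph j i} \ {0}).Subsingleton := by
  refine (Set.subsingleton_singleton (a := 3 - i)).anti fun j ⟨hj, hj0⟩ => ?_
  simp only [Set.mem_ofPred_eq, Set.mem_singleton_iff] at hj hj0 ⊢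
  revert j
  rcases hi with rfl | rfl <;> decide

/-- there is a finite digraph that is `(2,2)`-robust with 1 hop under
the 1-local model but not 2-strictly robust with 1 hop under the 1-local model. -/
theorem exists_CC_not_B : ∃ (n : ℕ) (E : Fin n → Fin n → Prop),
    (∀ F : Set (Fin n), FLocal E 1 1 F → RSRobust E 1 2 2 F) ∧
    ¬ (∀ F : Set (Fin n), FLocal E 1 1 F → StrictRobust E 1 2 F) := by
  refine ⟨5, exampleDigraph, fun F _ => exampleDigraph_rsRobust F, fun h => ?_⟩
  have hloc : FLocal exampleDigraph 1 1 {0} := FTotal.fLocal (Set.ncard_singleton 0).le _ _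
  exact not_strictRobust_one_two (a := 1) (b := 2) (by decide) (by simp) (by simp)
    (exampleDigraph_inNbrs_sdiff_zero (.inl rfl)) (exampleDigraph_inNbrs_sdiff_zero (.inr rfl))
    (h {0} hloc)
end

section
/- Let G = (V,E) be a finite undirected graph (a directed graph with symmetric edge relation) with |V| = n, and let f ≥ 1 and l ≥ 1 be integers with n ≥ f+2. If G is (f+1)-strictly robust with l hops under the f-total model, then G is (2f+1)-connected: for every set S ⊆ V with |S| ≤ 2f and S ≠ V, the subgraph of G induced by V∖S is connected. -/
/-!
Remove a set `S` of at most `2f` nodes and suppose `G - S` is disconnected, with `T` the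
component of `u`. Split `S` into a faulty set `F` and the rest `S \ F`, each of at most `f`
nodes. In `G - F`, every path entering `T` or `(V ∖ S) ∖ T` from outside crosses `S \ F`, and
independent paths cross it at distinct nodes; so no node of either set has `f + 1` independent
incoming paths, which `(f + 1)`-robustness of `G - F` forbids.
-/

def InBoundarySubset {V : Type*} (E : V → V → Prop) (T S : Set V) : Prop :=
  ∀ ⦃x w⦄, E x w → w ∈ T → x ∉ T → x ∈ S

section InBoundarySubset

variable {V : Type*} {E : V → V → Prop} {T S : Set V}

theorem InBoundarySubset.induced (hT : InBoundarySubset E T S) (W : Set V) :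
    InBoundarySubset (induced E W) T (S ∩ W) :=
  fun _ _ hxw hw hx => ⟨hT hxw.1 hw hx, hxw.2.1⟩

theorem InBoundarySubset.compl_diff (hsym : Symmetric E) (hT : InBoundarySubset E T S) :
    InBoundarySubset E (Sᶜ \ T) S := by
  intro x w hxw hw hx
  by_contra hxS
  have hxT : x ∈ T := by_contra fun hxT => hx ⟨hxS, hxT⟩
  exact hw.1 (hT (hsym hxw) hxT hw.2)

theorem inBoundarySubset_reachable (hsym : Symmetric E) (u : V) :
    InBoundarySubset E {w | w ∉ S ∧ Relation.ReflTransGen (induced E Sᶜ) u w} S := by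
  intro x w hxw hw hx
  by_contra hxS
  exact hx ⟨hxS, hw.2.tail ⟨hsym hxw, hw.1, hxS⟩⟩

theorem InBoundarySubset.exists_mem_sdiff_of_isChain (hT : InBoundarySubset E T S)
    {p : List V} {j i : V} (hp : p.IsChain E) (hj : p.head? = some j) (hi : p.getLast? = some i)
    (hjT : j ∉ T) (hiT : i ∈ T) : ∃ s ∈ p, s ∈ S \ T := by
  by_contra! hcross
  have hp' : p.IsChain fun x y => E x y ∧ x ∉ S \ T :=
    hp.imp_of_mem_imp fun x _ hx _ hxy => ⟨hxy, hcross x hx⟩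
  have hall : ∀ x ∈ p, x ∈ T := by
    refine hp'.backwards_induction (· ∈ T) p (fun x y ⟨hxy, hx⟩ hy => ?_) fun hne => ?_
    · by_contra hxT
      exact hx ⟨hT hxy hy hxT, hxT⟩
    · rw [List.getLast?_eq_some_getLast hne, Option.some_inj] at hi
      rwa [hi]
  exact hjT (hall j (List.mem_of_mem_head? hj))

theorem InBoundarySubset.ncard_le_of_memZ [Finite V] (hT : InBoundarySubset E T S)
    {l r : ℕ} {F : Set V} {i : V} (hi : MemZ E l F T r i) : r ≤ S.ncard := by
  obtain ⟨hiT, P, hpath, -, hindep⟩ := hi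
  have hcross : ∀ a, ∃ s ∈ P a, s ∈ S \ T := fun a =>
    have ⟨_, hjT, _, hch, hj, hi, _⟩ := hpath a
    hT.exists_mem_sdiff_of_isChain hch hj hi hjT hiT
  choose s hsP hsS using hcross
  have hinj : Function.Injective fun a => (⟨s a, (hsS a).1⟩ : S) := by
    intro a b hab
    by_contra hne
    have hsab : s a = s b := congrArg Subtype.val hab
    exact (hsS a).2 (hindep a b hne _ (hsP a) (hsab ▸ hsP b) ▸ hiT)
  simpa [Nat.card_coe_set_eq] using Nat.card_le_card_of_injective _ hinj

theorem InBoundarySubset.zSet_eq_empty [Finite V] (hT : InBoundarySubset E T S)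
    {l r : ℕ} {F : Set V} (hS : S.ncard < r) : ZSet E l F T r = ∅ :=
  Set.eq_empty_of_forall_notMem fun _ hi => (hT.ncard_le_of_memZ hi).not_gt hS

end InBoundarySubset

theorem RSRobustOn.zSet_nonempty {V : Type*} {E : V → V → Prop} {W F V1 V2 : Set V}
    {l r : ℕ} (h : RSRobustOn E W l r 1 F) (h1 : V1 ⊆ W) (h2 : V2 ⊆ W) (hne1 : V1.Nonempty)
    (hne2 : V2.Nonempty) (hdisj : Disjoint V1 V2) :
    (ZSet E l F V1 r).Nonempty ∨ (ZSet E l F V2 r).Nonempty := by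
  rcases h V1 V2 h1 h2 hne1 hne2 hdisj with hZ | hZ | hcard
  · exact .inl (by rwa [hZ])
  · exact .inr (by rwa [hZ])
  · by_contra! hempty
    simp [hempty.1, hempty.2] at hcard

theorem Set.exists_subset_ncard_le_and_ncard_sdiff_le {V : Type*} [Finite V] {S : Set V} {f : ℕ}
    (hS : S.ncard ≤ 2 * f) : ∃ F ⊆ S, F.ncard ≤ f ∧ (S \ F).ncard ≤ f := by
  obtain ⟨F, hFS, hF⟩ := Set.exists_subset_card_eq (min_le_right f S.ncard)
  refine ⟨F, hFS, hF ▸ min_le_left _ _, ?_⟩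
  rw [Set.ncard_sdiff hFS, hF]
  omega

theorem strict_robust_connectivity_general {V : Type*} [Fintype V] (E : V → V → Prop)
    (hsym : Symmetric E) (f l : ℕ)
    (h : ∀ F : Set V, FTotal f F → StrictRobust E l (f + 1) F) :
    ∀ S : Set V, S.ncard ≤ 2 * f → S ≠ Set.univ →
      ∀ u v : V, u ∉ S → v ∉ S → Relation.ReflTransGen (induced E Sᶜ) u v := by
  intro S hS _ u v hu hv
  by_contra huv
  obtain ⟨F, hFS, hF, hSF⟩ := Set.exists_subset_ncard_le_and_ncard_sdiff_le hS
  set T := {w | w ∉ S ∧ Relation.ReflTransGen (induced E Sᶜ) u w}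
  have hT : InBoundarySubset E T S := inBoundarySubset_reachable hsym u
  have hZ : ∀ T', InBoundarySubset E T' S → ZSet (induced E Fᶜ) l F T' (f + 1) = ∅ :=
    fun T' hT' => (hT'.induced Fᶜ).zSet_eq_empty (by rw [← Set.sdiff_eq]; omega)
  have hSFc : Sᶜ ⊆ Fᶜ := Set.compl_subset_compl.mpr hFS
  have hnonempty := (h F hF).zSet_nonempty (V1 := T) (V2 := Sᶜ \ T)
    (fun _ hx => hSFc hx.1) (fun _ hx => hSFc hx.1) ⟨u, hu, .refl⟩ ⟨v, hv, fun hvT => huv hvT.2⟩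
    Set.disjoint_sdiff_right
  simp [hZ T hT, hZ _ (hT.compl_diff hsym)] at hnonempty

/-- an undirected graph with `n ≥ f+2` vertices (`f ≥ 1`) that is
`(f+1)`-strictly robust with `l` hops under the `f`-total model is `(2f+1)`-connected. -/
theorem strict_robust_connectivity {V : Type*} [Fintype V] (E : V → V → Prop)
    (hsym : Symmetric E) (f l : ℕ) (hf : 1 ≤ f) (hl : 1 ≤ l)
    (hn : f + 2 ≤ Fintype.card V)
    (h : ∀ F : Set V, FTotal f F → StrictRobust E l (f + 1) F) :
    ∀ S : Set V, S.ncard ≤ 2 * f → S ≠ Set.univ →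
      ∀ u v : V, u ∉ S → v ∉ S → Relation.ReflTransGen (induced E Sᶜ) u v :=
  strict_robust_connectivity_general E hsym f l h
end

section
/- There exists a finite undirected graph G = (V,E) (a directed graph with symmetric edge relation) that is not 2-strictly robust with 1 hop under the 1-local model, but is 2-strictly robust with 2 hops under the 1-local model. (Multi-hop relaying can strictly increase strict robustness of a fixed graph.) -/
/-! The example is the triangular prism: two triangles `{0,1,2}` and `{3,4,5}` joined by the
rungs `0-3`, `1-4`, `2-5`.

With one hop, the rung `F = {0,3}` is 1-local (every other node sees exactly one of its ends),
and in the remaining square `1-2-5-4` every node of `{1,2}` or of `{4,5}` has a single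
neighbour outside its side, so neither side contains a node with two independent entries.

With two hops, any two nodes are joined by a path of at most two hops, so a 1-local set
outside of which some node lies has at most one node. Of two disjoint nonempty sets among the
at least five remaining nodes, one leaves two remaining nodes outside it, and an exhaustive
search finds a node of that set with two independent entry paths. -/

section

variable {V : Type*} {E : V → V → Prop} {l r : ℕ} {F S : Set V} {i j k : V} {p q : List V}

instance [DecidableEq V] [DecidableRel E] : Decidable (IsHopPath E l j i p) :=
  inferInstanceAs (Decidable (p.Nodup ∧ p.IsChain E ∧ _))

instance [DecidableRel E] {W : Set V} [DecidablePred (· ∈ W)] : DecidableRel (induced E W) :=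
  fun _ _ => inferInstanceAs (Decidable (_ ∧ _))

theorem IsHopPath.eq_pair_of_one_hop (h : IsHopPath E 1 j i p) : p = [j, i] ∧ E j i := by
  obtain ⟨-, hchain, hhead, hlast, hlen2, hlen1⟩ := h
  match p, hlen2, hlen1 with
  | [a, b], _, _ =>
    obtain rfl : a = j := by simpa using hhead
    obtain rfl : b = i := by simpa using hlast
    exact ⟨rfl, (List.isChain_cons_cons.mp hchain).1⟩

def IsEntryPath (E : V → V → Prop) (l : ℕ) (F S : Set V) (j i : V) (p : List V) : Prop :=
  j ∉ S ∧ IsHopPath E l j i p ∧ ∀ v ∈ interm p, v ∉ F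

instance [DecidableEq V] [DecidableRel E] [DecidablePred (· ∈ F)] [DecidablePred (· ∈ S)] :
    Decidable (IsEntryPath E l F S j i p) :=
  inferInstanceAs (Decidable (_ ∧ _ ∧ _))

theorem memZ_two_of_isEntryPath (hi : i ∈ S) (hp : IsEntryPath E l F S j i p)
    (hq : IsEntryPath E l F S k i q) (hpq : ∀ v ∈ p, v ∈ q → v = i) : MemZ E l F S 2 i := by
  refine ⟨hi, ![p, q], fun a => ?_, fun a => ?_, fun a b hab v => ?_⟩
  · fin_cases a
    exacts [⟨j, hp.1, hp.2.1⟩, ⟨k, hq.1, hq.2.1⟩]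
  · fin_cases a
    exacts [hp.2.2, hq.2.2]
  · fin_cases a <;> fin_cases b
    · exact absurd rfl hab
    · exact hpq v
    · exact fun hvq hvp => hpq v hvp hvq
    · exact absurd rfl hab

/-- With one hop, the sources of independent paths into `i` are distinct in-neighbours of `i`. -/
theorem MemZ.le_ncard_of_one_hop [Finite V] (h : MemZ E 1 F S r i) :
    r ≤ {j | j ∉ S ∧ E j i}.ncard := by
  obtain ⟨hi, P, hP, -, hindep⟩ := h
  choose src hsrc hpath using hP
  have hP : ∀ a, P a = [src a, i] ∧ E (src a) i := fun a => (hpath a).eq_pair_of_one_hop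
  have hinj : src.Injective := by
    intro a b hab
    by_contra hne
    have : src a = i := hindep a b hne _ (by simp [(hP a).1]) (by simp [(hP b).1, hab])
    exact hsrc a (this ▸ hi)
  calc r = (Set.range src).ncard := by rw [Set.ncard_range_of_injective hinj, Nat.card_fin]
    _ ≤ _ := Set.ncard_le_ncard <|
      Set.range_subset_iff.mpr fun a => show _ ∧ _ from ⟨hsrc a, (hP a).2⟩

theorem zSet_one_hop_eq_empty [Finite V] (h : ∀ i ∈ S, {j | j ∉ S ∧ E j i}.ncard < r) :
    ZSet E 1 F S r = ∅ :=
  Set.eq_empty_of_forall_notMem fun i hi => (h i hi.1).not_ge hi.le_ncard_of_one_hop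

theorem fLocal_one_hop [Finite V] {f : ℕ} (h : ∀ i ∉ F, {j ∈ F | E j i}.ncard ≤ f) :
    FLocal E 1 f F := by
  refine fun i hi => (Set.ncard_le_ncard ?_).trans (h i hi)
  rintro j ⟨hjF, p, hp⟩
  exact ⟨hjF, hp.eq_pair_of_one_hop.2⟩

theorem FLocal.ncard_le {f : ℕ} (hreach : ∀ j i, j ≠ i → ∃ p, IsHopPath E l j i p)
    (hF : FLocal E l f F) (hi : i ∉ F) : F.ncard ≤ f := by
  convert hF i hi using 2
  exact (Set.sep_eq_self_iff_mem_true.mpr fun j hj =>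
    hreach j i (ne_of_mem_of_not_mem hj hi)).symm

theorem strictRobust_univ : StrictRobust E l r Set.univ := by
  intro V1 _ hV1 _ ⟨v, hv⟩
  exact absurd (hV1 hv) (by simp)

theorem not_rsRobustOn_of_zSet_eq_empty {W V1 V2 : Set V} (hV1 : V1 ⊆ W) (hV2 : V2 ⊆ W)
    (hne1 : V1.Nonempty) (hne2 : V2.Nonempty) (hdisj : Disjoint V1 V2)
    (hZ1 : ZSet E l F V1 r = ∅) (hZ2 : ZSet E l F V2 r = ∅) : ¬ RSRobustOn E W l r 1 F := by
  intro h
  rcases h V1 V2 hV1 hV2 hne1 hne2 hdisj with h1 | h2 | hs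
  · exact hne1.ne_empty (h1.symm.trans hZ1)
  · exact hne2.ne_empty (h2.symm.trans hZ2)
  · simp [hZ1, hZ2] at hs

theorem le_ncard_diff_or_le_ncard_diff [Finite V] {W V1 V2 : Set V} (hV1 : V1 ⊆ W)
    (hV2 : V2 ⊆ W) (hdisj : Disjoint V1 V2) (hW : 2 * r ≤ W.ncard + 1) :
    r ≤ (W \ V1).ncard ∨ r ≤ (W \ V2).ncard := by
  have hunion : V1.ncard + V2.ncard ≤ W.ncard :=
    Set.ncard_union_eq hdisj ▸ Set.ncard_le_ncard (Set.union_subset hV1 hV2)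
  rw [Set.ncard_sdiff hV1, Set.ncard_sdiff hV2]
  omega

theorem rsRobustOn_of_forall_zSet_nonempty [Finite V] {W : Set V} (hW : 2 * r ≤ W.ncard + 1)
    (h : ∀ S ⊆ W, S.Nonempty → r ≤ (W \ S).ncard → (ZSet E l F S r).Nonempty) :
    RSRobustOn E W l r 1 F := by
  intro V1 V2 hV1 hV2 hne1 hne2 hdisj
  right; right
  rcases le_ncard_diff_or_le_ncard_diff hV1 hV2 hdisj hW with h1 | h2
  · have := (Set.ncard_pos (Set.toFinite _)).mpr (h V1 hV1 hne1 h1)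
    omega
  · have := (Set.ncard_pos (Set.toFinite _)).mpr (h V2 hV2 hne2 h2)
    omega

end

/-- The triangular prism: `j ~ i` iff `j ≠ i` and they lie on the same triangle
(`j / 3 = i / 3`) or on the same rung (`j % 3 = i % 3`). -/
def prism (j i : Fin 6) : Prop :=
  j ≠ i ∧ (j.val / 3 = i.val / 3 ∨ j.val % 3 = i.val % 3)

instance : DecidableRel prism := fun _ _ => inferInstanceAs (Decidable (_ ∧ _))

theorem prism_hopPath_two (j i : Fin 6) (hji : j ≠ i) : ∃ p, IsHopPath prism 2 j i p := by
  have : ∀ j i : Fin 6, j ≠ i →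
      ∃ k, IsHopPath prism 2 j i [j, i] ∨ IsHopPath prism 2 j i [j, k, i] := by decide
  obtain ⟨k, h | h⟩ := this j i hji
  exacts [⟨_, h⟩, ⟨_, h⟩]

theorem fLocal_prism_one_hop : FLocal prism 1 1 {0, 3} :=
  fLocal_one_hop fun i hi => (Set.ncard_le_one (Set.toFinite _)).mpr (by revert i; decide)

theorem not_strictRobust_prism_one_hop : ¬ StrictRobust prism 1 2 {0, 3} := by
  refine not_rsRobustOn_of_zSet_eq_empty (V1 := {1, 2}) (V2 := {4, 5})
    (by simp [Set.insert_subset_iff]) (by simp [Set.insert_subset_iff])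
    ⟨1, by simp⟩ ⟨4, by simp⟩ (by simp) ?_ ?_ <;>
  exact zSet_one_hop_eq_empty fun i hi =>
    Nat.lt_succ_of_le ((Set.ncard_le_one (Set.toFinite _)).mpr (by revert i; decide))

/-- Candidates for paths of at most two hops into `i`. -/
def shortListsTo (i : Fin 6) : List (List (Fin 6)) :=
  (List.finRange 6).map (fun a => [a, i]) ++
    (List.finRange 6).flatMap fun a => (List.finRange 6).map fun b => [a, b, i]

set_option synthInstance.maxSize 1024 in
theorem prism_exists_independent_entryPaths : ∀ F S : Finset (Fin 6), F.card ≤ 1 →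
    (∀ x ∈ S, x ∉ F) → S.Nonempty → 2 ≤ (Fᶜ \ S).card →
    ∃ i ∈ S, ∃ p ∈ shortListsTo i, ∃ q ∈ shortListsTo i,
      IsEntryPath (induced prism (↑F)ᶜ) 2 ↑F ↑S p.headI i p ∧
      IsEntryPath (induced prism (↑F)ᶜ) 2 ↑F ↑S q.headI i q ∧
      ∀ v ∈ p, v ∈ q → v = i := by
  decide +kernel

theorem strictRobust_prism_two_hops {F : Set (Fin 6)} (hF : F.ncard ≤ 1) :
    StrictRobust prism 2 2 F := by
  have hcompl : F.ncard + Fᶜ.ncard = 6 := (Set.ncard_add_ncard_compl F).trans (by simp)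
  lift F to Finset (Fin 6) using F.toFinite
  refine rsRobustOn_of_forall_zSet_nonempty (by omega) fun S hS hne hcard => ?_
  lift S to Finset (Fin 6) using S.toFinite
  rw [← Finset.coe_compl, ← Finset.coe_sdiff, Set.ncard_coe_finset] at hcard
  obtain ⟨i, hi, p, -, q, -, hp, hq, hpq⟩ := prism_exists_independent_entryPaths F S
    (by simpa using hF) (fun x hx => hS hx) (by simpa using hne) hcard
  exact ⟨i, memZ_two_of_isEntryPath hi hp hq hpq⟩

/-- there is a finite undirected graph that is not 2-strictly robust
with 1 hop under the 1-local model, but is 2-strictly robust with 2 hops under the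
1-local model (the `f`-local model being taken in `l`-hop neighbors). -/
theorem exists_strict_robust_improved_by_hops :
    ∃ (n : ℕ) (E : Fin n → Fin n → Prop), Symmetric E ∧
      ¬ (∀ F : Set (Fin n), FLocal E 1 1 F → StrictRobust E 1 2 F) ∧
      (∀ F : Set (Fin n), FLocal E 2 1 F → StrictRobust E 2 2 F) := by
  refine ⟨6, prism, fun _ _ h => ⟨h.1.symm, h.2.imp Eq.symm Eq.symm⟩,
    fun h => not_strictRobust_prism_one_hop (h _ fLocal_prism_one_hop), fun F hF => ?_⟩
  by_cases huniv : F = Set.univ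
  · exact huniv ▸ strictRobust_univ
  · obtain ⟨i, hi⟩ := (Set.ne_univ_iff_exists_notMem F).mp huniv
    exact strictRobust_prism_two_hops (hF.ncard_le prism_hopPath_two hi)
end

section
/- For every n ≥ 2 and every l ≥ 1, the complete directed graph on n vertices (with an edge between every ordered pair of distinct vertices) is ⌈n/2⌉-robust with l hops with respect to every set F ⊆ V. Combined with the bound r ≤ ⌈n/2⌉, complete networks achieve the largest possible robustness. -/
/-! Whichever of two disjoint sets `V₁, V₂` is the smaller has at most `⌊n/2⌋` nodes, so at
least `⌈n/2⌉` nodes lie outside it. In the complete digraph each of its nodes then receives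
`⌈n/2⌉` one-hop paths from distinct outside sources; such paths have no intermediate nodes
and meet only at their common endpoint, so that set is all of its own `Z`. -/

open Set

section

variable {V : Type*} {l r : ℕ} {F S : Set V}

theorem memZ_of_injective_inNeighbors {E : V → V → Prop} {i : V} (hl : 1 ≤ l) (hi : i ∈ S)
    (src : Fin r → V) (hinj : Function.Injective src) (hsrc : ∀ a, src a ∉ S ∧ E (src a) i) :
    MemZ E l F S r i := by
  have hne : ∀ a, src a ≠ i := fun a h => (hsrc a).1 (h ▸ hi)
  refine ⟨hi, fun a => [src a, i], fun a => ⟨src a, (hsrc a).1, ?_⟩, ?_, ?_⟩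
  · exact ⟨by simp [hne a], List.isChain_pair.2 (hsrc a).2, rfl, rfl, by simp, by simpa⟩
  · simp [interm]
  · intro a b hab v hva hvb
    simp only [List.mem_cons, List.not_mem_nil, or_false] at hva hvb
    rcases hva with rfl | rfl
    · exact hvb.resolve_left fun h => hab (hinj h)
    · rfl

theorem zSet_complete_eq_self [Finite V] (hl : 1 ≤ l) (h : r ≤ Sᶜ.ncard) :
    ZSet (fun j i : V => j ≠ i) l F S r = S := by
  refine Subset.antisymm (fun _ hi => hi.1) fun i hi => ?_
  have := Fintype.ofFinite ↥Sᶜ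
  obtain ⟨src⟩ : Nonempty (Fin r ↪ ↥Sᶜ) := by
    apply Function.Embedding.nonempty_of_card_le
    rwa [Fintype.card_fin, ← Nat.card_eq_fintype_card, Nat.card_coe_set_eq]
  refine memZ_of_injective_inNeighbors hl hi (fun a => src a)
    (Subtype.val_injective.comp src.injective) fun a => ⟨(src a).2, ?_⟩
  exact fun h => (src a).2 (h ▸ hi)

theorem ceil_half_le_ncard_compl_or [Finite V] {A B : Set V} (h : Disjoint A B) :
    (Nat.card V + 1) / 2 ≤ Aᶜ.ncard ∨ (Nat.card V + 1) / 2 ≤ Bᶜ.ncard := by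
  have hA := ncard_add_ncard_compl A
  have hB := ncard_add_ncard_compl B
  have hAB : A.ncard + B.ncard ≤ Nat.card V := by
    rw [← ncard_union_eq h, ← ncard_univ]
    exact ncard_le_ncard (subset_univ _)
  omega

theorem rsRobust_complete [Finite V] (hl : 1 ≤ l) (s : ℕ) :
    RSRobust (fun j i : V => j ≠ i) l ((Nat.card V + 1) / 2) s F := by
  intro V₁ V₂ _ _ _ _ hdisj
  rcases ceil_half_le_ncard_compl_or hdisj with h | h
  · exact Or.inl (zSet_complete_eq_self hl h)
  · exact Or.inr (Or.inl (zSet_complete_eq_self hl h))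

end

theorem complete_graph_max_robust_general (n : ℕ) (l : ℕ) (hl : 1 ≤ l)
    (F : Set (Fin n)) :
    RSRobust (fun j i : Fin n => j ≠ i) l ((n + 1) / 2) 1 F := by
  simpa using rsRobust_complete (F := F) hl 1

/-- for every `n ≥ 2` and `l ≥ 1`, the complete digraph on `n` vertices
is `⌈n/2⌉`-robust with `l` hops with respect to every `F`. -/
theorem complete_graph_max_robust (n : ℕ) (hn : 2 ≤ n) (l : ℕ) (hl : 1 ≤ l)
    (F : Set (Fin n)) :
    RSRobust (fun j i : Fin n => j ≠ i) l ((n + 1) / 2) 1 F :=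
  complete_graph_max_robust_general n l hl F
end

section
/- Let I be a nonempty finite index set, τ ∈ ℕ, and for each i ∈ I let x_i : ℕ → ℝ. For k ∈ ℕ define the windowed extremes X̄[k] = max over i ∈ I and s with max(0, k−τ) ≤ s ≤ k of x_i[s], and X̲[k] = min over the same range of x_i[s]. Suppose that for every i ∈ I and every k ∈ ℕ, X̲[k] ≤ x_i[k+1] ≤ X̄[k]. Then X̄ is nonincreasing in k and X̲ is nondecreasing in k; consequently x_i[k] ∈ [X̲[0], X̄[0]] for every i ∈ I and every k ∈ ℕ, and both limits lim X̄[k] and lim X̲[k] exist. -/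
/-!
A new value `x i (k + 1)` is at most `Xbar k`, and every older value in the window of `k + 1`
also lies in the window of `k`; since `Xbar (k + 1)` is one of these values, `Xbar (k + 1) ≤ Xbar k`.
Dually `Xlow` is monotone. Every value is then trapped in `[Xlow 0, Xbar 0]`, so the two monotone
sequences are bounded (each of their terms is a value) and converge.
-/

open Set

section WindowExtremes

variable {ι α : Type*} [Preorder α] {τ : ℕ} {x : ι → ℕ → α} {M m : ℕ → α}

theorem windowMax_succ_le {k : ℕ}
    (hub : ∀ i s, k - τ ≤ s → s ≤ k → x i s ≤ M k)
    (hmem : ∃ i s, k + 1 - τ ≤ s ∧ s ≤ k + 1 ∧ M (k + 1) = x i s)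
    (hstep : ∀ i, x i (k + 1) ≤ M k) :
    M (k + 1) ≤ M k := by
  obtain ⟨i, s, hs_lo, hs_hi, hM⟩ := hmem
  rw [hM]
  rcases Nat.lt_or_eq_of_le hs_hi with hs | rfl
  · exact hub i s (by omega) (by omega)
  · exact hstep i

theorem antitone_of_windowMax
    (hub : ∀ k i s, k - τ ≤ s → s ≤ k → x i s ≤ M k)
    (hmem : ∀ k, ∃ i s, k - τ ≤ s ∧ s ≤ k ∧ M k = x i s)
    (hstep : ∀ i k, x i (k + 1) ≤ M k) :
    Antitone M :=
  antitone_nat_of_succ_le fun k => windowMax_succ_le (hub k) (hmem (k + 1)) (hstep · k)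

theorem monotone_of_windowMin
    (hlb : ∀ k i s, k - τ ≤ s → s ≤ k → m k ≤ x i s)
    (hmem : ∀ k, ∃ i s, k - τ ≤ s ∧ s ≤ k ∧ m k = x i s)
    (hstep : ∀ i k, m k ≤ x i (k + 1)) :
    Monotone m :=
  antitone_of_windowMax (α := αᵒᵈ) hlb hmem hstep

theorem le_windowMax_zero
    (hub : ∀ k i s, k - τ ≤ s → s ≤ k → x i s ≤ M k)
    (hstep : ∀ i k, x i (k + 1) ≤ M k) (hM : Antitone M) (i : ι) :
    ∀ k, x i k ≤ M 0
  | 0 => hub 0 i 0 (Nat.zero_sub τ).le le_rfl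
  | k + 1 => (hstep i k).trans (hM k.zero_le)

theorem windowMin_zero_le
    (hlb : ∀ k i s, k - τ ≤ s → s ≤ k → m k ≤ x i s)
    (hstep : ∀ i k, m k ≤ x i (k + 1)) (hm : Monotone m) (i : ι) (k : ℕ) :
    m 0 ≤ x i k :=
  le_windowMax_zero (α := αᵒᵈ) hlb hstep hm.dual_right i k

theorem bddBelow_range_of_windowMax {a : α}
    (hmem : ∀ k, ∃ i s, k - τ ≤ s ∧ s ≤ k ∧ M k = x i s) (hx : ∀ i s, a ≤ x i s) :
    BddBelow (range M) := by
  refine ⟨a, ?_⟩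
  rintro _ ⟨k, rfl⟩
  obtain ⟨i, s, -, -, hM⟩ := hmem k
  exact hM ▸ hx i s

theorem bddAbove_range_of_windowMin {b : α}
    (hmem : ∀ k, ∃ i s, k - τ ≤ s ∧ s ≤ k ∧ m k = x i s) (hx : ∀ i s, x i s ≤ b) :
    BddAbove (range m) :=
  bddBelow_range_of_windowMax (α := αᵒᵈ) hmem hx

end WindowExtremes

theorem windowed_extremes_monotone_general {I : Type*}
    (τ : ℕ) (x : I → ℕ → ℝ) (Xbar Xlow : ℕ → ℝ)
    (hXbar_ub : ∀ k : ℕ, ∀ i : I, ∀ s : ℕ, k - τ ≤ s → s ≤ k → x i s ≤ Xbar k)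
    (hXbar_mem : ∀ k : ℕ, ∃ i : I, ∃ s : ℕ, k - τ ≤ s ∧ s ≤ k ∧ Xbar k = x i s)
    (hXlow_lb : ∀ k : ℕ, ∀ i : I, ∀ s : ℕ, k - τ ≤ s → s ≤ k → Xlow k ≤ x i s)
    (hXlow_mem : ∀ k : ℕ, ∃ i : I, ∃ s : ℕ, k - τ ≤ s ∧ s ≤ k ∧ Xlow k = x i s)
    (hstep : ∀ i : I, ∀ k : ℕ, Xlow k ≤ x i (k + 1) ∧ x i (k + 1) ≤ Xbar k) :
    Antitone Xbar ∧ Monotone Xlow ∧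
      (∀ i : I, ∀ k : ℕ, Xlow 0 ≤ x i k ∧ x i k ≤ Xbar 0) ∧
      (∃ a : ℝ, Filter.Tendsto Xbar Filter.atTop (nhds a)) ∧
      (∃ b : ℝ, Filter.Tendsto Xlow Filter.atTop (nhds b)) := by
  have hstep_ub i k := (hstep i k).2
  have hstep_lb i k := (hstep i k).1
  have hbar : Antitone Xbar := antitone_of_windowMax hXbar_ub hXbar_mem hstep_ub
  have hlow : Monotone Xlow := monotone_of_windowMin hXlow_lb hXlow_mem hstep_lb
  have hsafe_lb := windowMin_zero_le hXlow_lb hstep_lb hlow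
  have hsafe_ub := le_windowMax_zero hXbar_ub hstep_ub hbar
  exact ⟨hbar, hlow, fun i k => ⟨hsafe_lb i k, hsafe_ub i k⟩,
    ⟨_, tendsto_atTop_ciInf hbar (bddBelow_range_of_windowMax hXbar_mem hsafe_lb)⟩,
    ⟨_, tendsto_atTop_ciSup hlow (bddAbove_range_of_windowMin hXlow_mem hsafe_ub)⟩⟩

/-- safety/monotonicity of the windowed extremes.  Here `Xbar k`
(resp. `Xlow k`) is the maximum (resp. minimum) of the values `x i s` over all
`i ∈ I` and `max (0, k - τ) ≤ s ≤ k` (note `k - τ` is truncated subtraction), each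
characterized by being an upper (resp. lower) bound that is attained.  If every
next value `x i (k+1)` lies between `Xlow k` and `Xbar k`, then `Xbar` is
nonincreasing, `Xlow` is nondecreasing, all values stay in `[Xlow 0, Xbar 0]`,
and both limits exist. -/
theorem windowed_extremes_monotone {I : Type*} [Fintype I] [Nonempty I]
    (τ : ℕ) (x : I → ℕ → ℝ) (Xbar Xlow : ℕ → ℝ)
    (hXbar_ub : ∀ k : ℕ, ∀ i : I, ∀ s : ℕ, k - τ ≤ s → s ≤ k → x i s ≤ Xbar k)
    (hXbar_mem : ∀ k : ℕ, ∃ i : I, ∃ s : ℕ, k - τ ≤ s ∧ s ≤ k ∧ Xbar k = x i s)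
    (hXlow_lb : ∀ k : ℕ, ∀ i : I, ∀ s : ℕ, k - τ ≤ s → s ≤ k → Xlow k ≤ x i s)
    (hXlow_mem : ∀ k : ℕ, ∃ i : I, ∃ s : ℕ, k - τ ≤ s ∧ s ≤ k ∧ Xlow k = x i s)
    (hstep : ∀ i : I, ∀ k : ℕ, Xlow k ≤ x i (k + 1) ∧ x i (k + 1) ≤ Xbar k) :
    Antitone Xbar ∧ Monotone Xlow ∧
      (∀ i : I, ∀ k : ℕ, Xlow 0 ≤ x i k ∧ x i k ≤ Xbar 0) ∧
      (∃ a : ℝ, Filter.Tendsto Xbar Filter.atTop (nhds a)) ∧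
      (∃ b : ℝ, Filter.Tendsto Xlow Filter.atTop (nhds b)) :=
  windowed_extremes_monotone_general τ x Xbar Xlow hXbar_ub hXbar_mem hXlow_lb hXlow_mem hstep
end
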